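/- arXiv:1905.04403 — 2 statements merged into one kernel-verified Lean document; each statement's English description precedes it below -/
import Mathlib

section
/- Let P be a finite set, let d : P → ℝ be a probability distribution on P (i.e. d(t) ≥ 0 for all t ∈ P and ∑_{t∈P} d(t) = 1), and let d̂ : P → ℝ be lower probability estimates satisfying 0 ≤ d̂(t) ≤ d(t) for all t ∈ P. Let v, U : P → ℝ be functions with v(t) ≤ U(t) ≤ 1 for all t ∈ P. Then ∑_{t∈P} d(t)·v(t) ≤ (∑_{t∈P} d̂(t)·U(t)) + (1 − ∑_{t∈P} d̂(t)). (This is the correctness of the modified Bellman upper-bound update Û of the algorithm, for a single state-action pair: the true expected value under d of the value function v is over-approximated by the update computed from the lower probability estimates d̂ and the over-approximation U, with the remaining probability mass 1 − ∑ d̂(t) conservatively assigned the maximal value 1.) -/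
theorem mul_le_mul_add_sub_of_le_one {R : Type*} [CommRing R] [LinearOrder R]
    [IsStrictOrderedRing R] {p q v u : R} (hp : 0 ≤ p) (hqp : q ≤ p) (hvu : v ≤ u)
    (hu : u ≤ 1) :
    p * v ≤ q * u + (p - q) :=
  calc p * v ≤ p * u := mul_le_mul_of_nonneg_left hvu hp
    _ = q * u + (p - q) * u := by ring
    _ ≤ q * u + (p - q) := by
      gcongr
      exact mul_le_of_le_one_right (sub_nonneg.2 hqp) hu

theorem upper_update_correct_general {α : Type*} [Fintype α]
    (d dhat v U : α → ℝ)
    (hd_nonneg : ∀ t, 0 ≤ d t)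
    (hd_sum : ∑ t, d t = 1)
    (hdhat_le : ∀ t, dhat t ≤ d t)
    (hvU : ∀ t, v t ≤ U t)
    (hU1 : ∀ t, U t ≤ 1) :
    ∑ t, d t * v t ≤ (∑ t, dhat t * U t) + (1 - ∑ t, dhat t) :=
  calc ∑ t, d t * v t ≤ ∑ t, (dhat t * U t + (d t - dhat t)) :=
        Finset.sum_le_sum fun t _ =>
          mul_le_mul_add_sub_of_le_one (hd_nonneg t) (hdhat_le t) (hvU t) (hU1 t)
    _ = (∑ t, dhat t * U t) + (1 - ∑ t, dhat t) := by
        rw [Finset.sum_add_distrib, Finset.sum_sub_distrib, hd_sum]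

/-- Correctness of the modified Bellman upper-bound update: given a probability
distribution `d` on a finite set, lower probability estimates `dhat` with
`0 ≤ dhat t ≤ d t`, and functions `v, U` with `v t ≤ U t ≤ 1`, the true expected
value of `v` under `d` is over-approximated by
`∑ dhat t * U t + (1 - ∑ dhat t)`. -/
theorem upper_update_correct {α : Type*} [Fintype α]
    (d dhat v U : α → ℝ)
    (hd_nonneg : ∀ t, 0 ≤ d t)
    (hd_sum : ∑ t, d t = 1)
    (hdhat_nonneg : ∀ t, 0 ≤ dhat t)
    (hdhat_le : ∀ t, dhat t ≤ d t)
    (hvU : ∀ t, v t ≤ U t)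
    (hU1 : ∀ t, U t ≤ 1) :
    ∑ t, d t * v t ≤ (∑ t, dhat t * U t) + (1 - ∑ t, dhat t) :=
  upper_update_correct_general d dhat v U hd_nonneg hd_sum hdhat_le hvU hU1
end

section
/- Let p ∈ [0,1], let n be a positive natural number, let c ≥ 0, and let X be a random variable distributed according to the binomial distribution with n trials and success probability p. Then the probability that X/n − p ≤ −c (equivalently, that the empirical success frequency underestimates p by at least c) is at most exp(−2·c²·n). -/
/-!
Chernoff's method: on the event `X ≤ (p - c) n` the weight `exp (t ((p - c) n - X))` is at least
one, so the probability of the event is at most `exp (t (p - c) n)` times the moment generating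
function `(p e^{-t} + 1 - p)^n` of the binomial law. Hoeffding's lemma bounds the Bernoulli factor
by `exp (-t p + t² / 8)`, and `t = 4c` optimizes the resulting exponent to `-2 c² n`.
-/

open Real MeasureTheory ProbabilityTheory unitInterval Finset

theorem bernoulli_mgf_le (p : I) (s : ℝ) : p * exp s + (1 - p) ≤ exp (s * p + s ^ 2 / 8) := by
  have hHoeffding := (hasSubgaussianMGF_of_mem_Icc (μ := Ber(true, false, p))
    (X := fun b => cond b 1 0) (a := 0) (b := 1) .of_discrete
    (ae_of_all _ fun b => by cases b <;> simp)).mgf_le s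
  simp only [mgf, integral_bernoulliMeasure, cond_true, cond_false, smul_eq_mul, mul_one,
    mul_zero, add_zero, zero_sub, mul_neg, sub_zero, nnnorm_one, NNReal.coe_div, NNReal.coe_pow,
    NNReal.coe_one, NNReal.coe_ofNat] at hHoeffding
  have hsuccess : exp (s * p) * exp (s * (1 - p)) = exp s := by rw [← exp_add]; ring_nf
  have hfailure : exp (s * p) * exp (-(s * p)) = 1 := by rw [← exp_add, add_neg_cancel, exp_zero]
  calc p * exp s + (1 - p)
      = exp (s * p) * (p * exp (s * (1 - p)) + (1 - p) * exp (-(s * p))) := by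
        linear_combination (-(p : ℝ)) * hsuccess - (1 - (p : ℝ)) * hfailure
    _ ≤ exp (s * p) * exp (s ^ 2 / 8) := by
        gcongr
        refine hHoeffding.trans_eq ?_
        congr 1
        ring
    _ = exp (s * p + s ^ 2 / 8) := (exp_add _ _).symm

theorem sum_choose_mul_exp_mul_eq_pow (p s : ℝ) (n : ℕ) :
    ∑ k ∈ range (n + 1), (n.choose k : ℝ) * p ^ k * (1 - p) ^ (n - k) * exp (s * k)
      = (p * exp s + (1 - p)) ^ n := by
  rw [add_pow]
  refine sum_congr rfl fun k _ => ?_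
  rw [mul_pow, ← exp_nat_mul, mul_comm (k : ℝ) s]
  ring

theorem binomial_mgf_le (p : I) (n : ℕ) (s : ℝ) :
    ∑ k ∈ range (n + 1), (n.choose k : ℝ) * p ^ k * (1 - p) ^ (n - k) * exp (s * k)
      ≤ exp (n * (s * p + s ^ 2 / 8)) := by
  rw [sum_choose_mul_exp_mul_eq_pow, exp_nat_mul]
  exact pow_le_pow_left₀ (add_nonneg (mul_nonneg (nonneg p) (exp_nonneg s)) (one_minus_nonneg p))
    (bernoulli_mgf_le p s) n

theorem sum_filter_le_le_exp_mul_sum {ι : Type*} (s : Finset ι) {w x : ι → ℝ}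
    (hw : ∀ i ∈ s, 0 ≤ w i) (a : ℝ) {t : ℝ} (ht : 0 ≤ t) :
    ∑ i ∈ s with x i ≤ a, w i ≤ exp (t * a) * ∑ i ∈ s, w i * exp (-t * x i) := by
  rw [mul_sum]
  calc ∑ i ∈ s with x i ≤ a, w i
      ≤ ∑ i ∈ s with x i ≤ a, w i * exp (t * (a - x i)) := by
        refine sum_le_sum fun i hi => le_mul_of_one_le_right (hw i (filter_subset _ _ hi)) ?_
        exact one_le_exp (mul_nonneg ht (sub_nonneg.2 (mem_filter.1 hi).2))
    _ ≤ ∑ i ∈ s, w i * exp (t * (a - x i)) :=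
        sum_le_sum_of_subset_of_nonneg (filter_subset _ _) fun i hi _ =>
          mul_nonneg (hw i hi) (exp_nonneg _)
    _ = ∑ i ∈ s, exp (t * a) * (w i * exp (-t * x i)) := by
        refine sum_congr rfl fun i _ => ?_
        rw [mul_left_comm, ← exp_add]
        ring_nf

/-- One-sided Hoeffding bound for the binomial distribution: if `X` is binomial
with `n` trials and success probability `p ∈ [0,1]`, then the probability that
the empirical frequency `X/n` underestimates `p` by at least `c` (i.e.
`X/n - p ≤ -c`) is at most `exp (-2 c² n)`. The probability of the event is
expressed as the sum of binomial probabilities `C(n,k) p^k (1-p)^(n-k)` over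
the outcomes `k` in the event. -/
theorem hoeffding_one_sided (p : ℝ) (hp0 : 0 ≤ p) (hp1 : p ≤ 1)
    (n : ℕ) (hn : 0 < n) (c : ℝ) (hc : 0 ≤ c) :
    ∑ k ∈ (Finset.range (n + 1)).filter (fun k : ℕ => (k : ℝ) / n - p ≤ -c),
        (n.choose k : ℝ) * p ^ k * (1 - p) ^ (n - k)
      ≤ Real.exp (-2 * c ^ 2 * n) := by
  have hevent : ∀ k : ℕ, (k : ℝ) / n - p ≤ -c ↔ (k : ℝ) ≤ (p - c) * n := fun k => by
    rw [sub_le_iff_le_add, div_le_iff₀ (Nat.cast_pos.2 hn)]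
    constructor <;> intro h <;> linarith
  rw [filter_congr fun k _ => hevent k]
  calc _ ≤ exp (4 * c * ((p - c) * n)) * ∑ k ∈ range (n + 1),
          (n.choose k : ℝ) * p ^ k * (1 - p) ^ (n - k) * exp (-(4 * c) * k) :=
        sum_filter_le_le_exp_mul_sum _ (fun k _ => by positivity) _ (by positivity)
    _ ≤ exp (4 * c * ((p - c) * n)) * exp (n * (-(4 * c) * p + (-(4 * c)) ^ 2 / 8)) := by
        gcongr
        exact binomial_mgf_le ⟨p, hp0, hp1⟩ n _
    _ = exp (-2 * c ^ 2 * n) := by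
        rw [← exp_add]
        ring_nf
end
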